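/- Let μ > 0, f : ℝ^d → ℝ be differentiable and μ-strongly convex with minimizer x⋆, and let X be a twice-differentiable solution of X''(t) + 2√μ X'(t) + ∇f(X t) = 0. Define V(t) = f(X t) - f(x⋆) + (4/9)μ ‖X t - x⋆‖² + (4/3)√μ ⟪X t - x⋆, X'(t)⟫ + (1/2)‖X'(t)‖². Then V'(t) ≤ -(4/3)√μ V(t) for all t. -/

import Mathlib

open scoped RealInnerProductSpace

/-!
Along the flow, a direct computation using the ODE gives, with `y = X - x⋆`,
`V' + (4/3)√μ V = -(4/3)√μ (⟪y, ∇f X⟫ - (f X - f x⋆) - (4/9) μ ‖y‖²)`: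
all cross terms in `⟪y, X'⟫` and `‖X'‖²` cancel. Strong convexity at `(X, x⋆)` bounds
`⟪y, ∇f X⟫ - (f X - f x⋆)` below by `(μ/2) ‖y‖² ≥ (4/9) μ ‖y‖²`, so the bracket is nonnegative.
-/

section

variable {E : Type*} [NormedAddCommGroup E] [InnerProductSpace ℝ E]

theorem HasGradientAt.comp_hasDerivAt [CompleteSpace E] {f : E → ℝ} {g v : E} {X : ℝ → E} {t : ℝ}
    (hf : HasGradientAt f g (X t)) (hX : HasDerivAt X v t) :
    HasDerivAt (fun τ => f (X τ)) ⟪g, v⟫ t := by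
  refine (hf.hasFDerivAt.comp_hasDerivAt t hX).congr_deriv ?_
  simp

theorem inner_sub_gradient_ge_of_strongly_convex [CompleteSpace E] {μ : ℝ} {f : E → ℝ}
    (hsc : ∀ x y, f y ≥ f x + ⟪gradient f x, y - x⟫ + (μ / 2) * ‖y - x‖ ^ 2) (x xstar : E) :
    f x - f xstar + (μ / 2) * ‖x - xstar‖ ^ 2 ≤ ⟪x - xstar, gradient f x⟫ := by
  have h := hsc x xstar
  rw [norm_sub_rev, ← neg_sub x xstar, inner_neg_right, real_inner_comm] at h
  linarith

noncomputable def polyakLyapunov (μ : ℝ) (f : E → ℝ) (xstar x v : E) : ℝ :=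
  f x - f xstar + (4 / 9) * μ * ‖x - xstar‖ ^ 2 + (4 / 3) * √μ * ⟪x - xstar, v⟫
    + (1 / 2) * ‖v‖ ^ 2

theorem hasDerivAt_polyakLyapunov [CompleteSpace E] {μ : ℝ} {f : E → ℝ} {xstar a : E}
    {X X' : ℝ → E} {t : ℝ} (hf : DifferentiableAt ℝ f (X t)) (hX : HasDerivAt X (X' t) t)
    (hX' : HasDerivAt X' a t) :
    HasDerivAt (fun τ => polyakLyapunov μ f xstar (X τ) (X' τ))
      (⟪gradient f (X t), X' t⟫ + (8 / 9) * μ * ⟪X t - xstar, X' t⟫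
        + (4 / 3) * √μ * (⟪X t - xstar, a⟫ + ‖X' t‖ ^ 2) + ⟪X' t, a⟫) t := by
  have hY : HasDerivAt (fun τ => X τ - xstar) (X' t) t := hX.sub_const xstar
  refine ((((hf.hasGradientAt.comp_hasDerivAt hX).sub_const (f xstar)).add
    (hY.norm_sq.const_mul ((4 / 9) * μ))).add ((hY.inner ℝ hX').const_mul ((4 / 3) * √μ))).add
    (hX'.norm_sq.const_mul (1 / 2)) |>.congr_deriv ?_
  rw [real_inner_self_eq_norm_sq]
  ring

theorem polyakLyapunov_derivative_eq_of_ode {μ : ℝ} (hμ : 0 ≤ μ) (f : E → ℝ) (xstar x v a g : E)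
    (hode : a + (2 * √μ) • v + g = 0) :
    ⟪g, v⟫ + (8 / 9) * μ * ⟪x - xstar, v⟫ + (4 / 3) * √μ * (⟪x - xstar, a⟫ + ‖v‖ ^ 2) + ⟪v, a⟫
      = -(4 / 3) * √μ * polyakLyapunov μ f xstar x v
        - (4 / 3) * √μ * (⟪x - xstar, g⟫ - (f x - f xstar) - (4 / 9) * μ * ‖x - xstar‖ ^ 2) := by
  have ha : a = -(2 * √μ) • v - g := by linear_combination (norm := module) hode
  have hs : √μ * √μ = μ := Real.mul_self_sqrt hμ
  subst ha
  simp only [polyakLyapunov, inner_sub_right, inner_smul_right, real_inner_self_eq_norm_sq,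
    real_inner_comm g v]
  linear_combination (-(8 / 9) * ⟪x - xstar, v⟫) * hs

end

theorem polyak_oscillator_improved_lyapunov_rate_general
    (d : ℕ) (μ : ℝ) (hμ : 0 < μ)
    (f : EuclideanSpace ℝ (Fin d) → ℝ) (hf : Differentiable ℝ f)
    (xstar : EuclideanSpace ℝ (Fin d))
    (hsc : ∀ x y, f y ≥ f x + ⟪gradient f x, y - x⟫ + (μ / 2) * ‖y - x‖ ^ 2)
    (X X' X'' : ℝ → EuclideanSpace ℝ (Fin d))
    (hX : ∀ t, HasDerivAt X (X' t) t)
    (hX' : ∀ t, HasDerivAt X' (X'' t) t)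
    (hODE : ∀ t, X'' t + (2 * Real.sqrt μ) • X' t + gradient f (X t) = 0)
    (V : ℝ → ℝ)
    (hV : ∀ t, V t = f (X t) - f xstar + (4 / 9) * μ * ‖X t - xstar‖ ^ 2
        + (4 / 3) * Real.sqrt μ * ⟪X t - xstar, X' t⟫ + (1 / 2) * ‖X' t‖ ^ 2) :
    ∀ t, deriv V t ≤ -(4 / 3) * Real.sqrt μ * V t := by
  intro t
  have hVL : V = fun τ => polyakLyapunov μ f xstar (X τ) (X' τ) := funext hV
  rw [hVL, (hasDerivAt_polyakLyapunov (hf (X t)) (hX t) (hX' t)).deriv,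
    polyakLyapunov_derivative_eq_of_ode hμ.le f xstar _ _ _ _ (hODE t)]
  have hgap := inner_sub_gradient_ge_of_strongly_convex hsc (X t) xstar
  have hgap_nonneg : 0 ≤ ⟪X t - xstar, gradient f (X t)⟫ - (f (X t) - f xstar)
      - (4 / 9) * μ * ‖X t - xstar‖ ^ 2 := by
    linarith [mul_nonneg hμ.le (sq_nonneg ‖X t - xstar‖)]
  linarith [mul_nonneg (by positivity : (0 : ℝ) ≤ 4 / 3 * √μ) hgap_nonneg]

theorem polyak_oscillator_improved_lyapunov_rate
    (d : ℕ) (μ : ℝ) (hμ : 0 < μ)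
    (f : EuclideanSpace ℝ (Fin d) → ℝ) (hf : Differentiable ℝ f)
    (xstar : EuclideanSpace ℝ (Fin d))
    (hsc : ∀ x y, f y ≥ f x + ⟪gradient f x, y - x⟫ + (μ / 2) * ‖y - x‖ ^ 2)
    (hmin : ∀ y, f xstar ≤ f y)
    (X X' X'' : ℝ → EuclideanSpace ℝ (Fin d))
    (hX : ∀ t, HasDerivAt X (X' t) t)
    (hX' : ∀ t, HasDerivAt X' (X'' t) t)
    (hODE : ∀ t, X'' t + (2 * Real.sqrt μ) • X' t + gradient f (X t) = 0)
    (V : ℝ → ℝ)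
    (hV : ∀ t, V t = f (X t) - f xstar + (4 / 9) * μ * ‖X t - xstar‖ ^ 2
        + (4 / 3) * Real.sqrt μ * ⟪X t - xstar, X' t⟫ + (1 / 2) * ‖X' t‖ ^ 2) :
    ∀ t, deriv V t ≤ -(4 / 3) * Real.sqrt μ * V t :=
  polyak_oscillator_improved_lyapunov_rate_general d μ hμ f hf xstar hsc X X' X'' hX hX' hODE V hV
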